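/- arXiv:math/0105160 — 2 statements merged into one kernel-verified Lean document; each statement's English description precedes it below -/
import Mathlib

section
/- Let H be a complex Hilbert space and let Q and Q₀ be orthogonal projections on H (bounded self-adjoint idempotent operators) with ‖Q − Q₀‖ < 1. Define W = (1 − (Q − Q₀)²)^{−1/2} · [Q Q₀ + (1 − Q)(1 − Q₀)], where (1 − (Q − Q₀)²)^{−1/2} is the inverse square root of the positive invertible operator 1 − (Q − Q₀)², given by the continuous functional calculus. Then W is a unitary operator on H and W⁻¹ Q W = Q₀. -/
/-!
For projections `p`, `q` the element `u = p q + (1 - p)(1 - q)` intertwines them, `p u = u q`,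
and a direct computation gives `u* u = u u* = 1 - (p - q)²`. When `‖p - q‖ < 1` this element has
positive spectrum, and it commutes with `u`, `p` and `q`; dividing `u` by its square root,
i.e. forming Kato's direct rotation `(1 - (p - q)²)^(-1/2) u`, therefore produces a unitary
that still intertwines `p` and `q`.
-/

section Intertwiner

variable {R : Type*} [Ring R]

def projIntertwiner (p q : R) : R := p * q + (1 - p) * (1 - q)

variable {p q : R}

theorem mul_projIntertwiner (hp : IsIdempotentElem p) (hq : IsIdempotentElem q) :
    p * projIntertwiner p q = projIntertwiner p q * q := by
  simp only [projIntertwiner, mul_add, add_mul, mul_sub, sub_mul, mul_one, one_mul, ← mul_assoc,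
    hp.eq, hq.eq, hq.mul_mul_self]
  abel

theorem projIntertwiner_mul_projIntertwiner (hp : IsIdempotentElem p) (hq : IsIdempotentElem q) :
    projIntertwiner p q * projIntertwiner q p = 1 - (p - q) ^ 2 := by
  simp only [projIntertwiner, sq, mul_add, add_mul, mul_sub, sub_mul, mul_one, one_mul,
    ← mul_assoc, hp.eq, hq.eq, hq.mul_mul_self]
  abel

theorem commute_mul_of_intertwines {u v : R} (hu : p * u = u * q) (hv : q * v = v * p) :
    Commute p (u * v) := by
  rw [Commute, SemiconjBy, ← mul_assoc, hu, mul_assoc, hv, mul_assoc]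

variable [StarRing R]

theorem star_projIntertwiner (hp : IsSelfAdjoint p) (hq : IsSelfAdjoint q) :
    star (projIntertwiner p q) = projIntertwiner q p := by
  simp [projIntertwiner, hp.star_eq, hq.star_eq]

theorem IsStarProjection.projIntertwiner_mul_star (hp : IsStarProjection p)
    (hq : IsStarProjection q) :
    projIntertwiner p q * star (projIntertwiner p q) = 1 - (p - q) ^ 2 := by
  rw [star_projIntertwiner hp.isSelfAdjoint hq.isSelfAdjoint,
    projIntertwiner_mul_projIntertwiner hp.isIdempotentElem hq.isIdempotentElem]

theorem IsStarProjection.star_mul_projIntertwiner (hp : IsStarProjection p)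
    (hq : IsStarProjection q) :
    star (projIntertwiner p q) * projIntertwiner p q = 1 - (p - q) ^ 2 := by
  rw [star_projIntertwiner hp.isSelfAdjoint hq.isSelfAdjoint,
    projIntertwiner_mul_projIntertwiner hq.isIdempotentElem hp.isIdempotentElem, ← neg_sub p,
    neg_sq]

end Intertwiner

theorem spectrum_one_sub_pos {A : Type*} [NormedRing A] [NormedAlgebra ℝ A] [NormOneClass A]
    [CompleteSpace A] {b : A} (hb : ‖b‖ < 1) : ∀ x ∈ spectrum ℝ (1 - b), 0 < x := by
  intro x hx
  rw [← map_one (algebraMap ℝ A), ← spectrum.singleton_sub_eq] at hx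
  obtain ⟨_, rfl, y, hy, rfl⟩ := hx
  have : |y| < 1 := (spectrum.norm_le_norm_of_mem hy).trans_lt hb
  linarith [abs_lt.mp this]

section InvSqrt

variable {A : Type*} [Ring A] [StarRing A] [Algebra ℝ A] [TopologicalSpace A]
  [ContinuousFunctionalCalculus ℝ A IsSelfAdjoint]

theorem cfc_rpow_neg_half_mul_mul_cfc_rpow_neg_half {a : A} (ha : IsSelfAdjoint a)
    (hspec : ∀ x ∈ spectrum ℝ a, 0 < x) :
    cfc (fun x : ℝ => x ^ (-(1/2 : ℝ))) a * a * cfc (fun x : ℝ => x ^ (-(1/2 : ℝ))) a = 1 := by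
  have hcont : ContinuousOn (fun x : ℝ => x ^ (-(1/2 : ℝ))) (spectrum ℝ a) := fun x hx =>
    (Real.continuousAt_rpow_const x _ (Or.inl (hspec x hx).ne')).continuousWithinAt
  nth_rewrite 2 [← cfc_id' ℝ a]
  rw [← cfc_mul .., ← cfc_mul .., ← cfc_const_one ℝ a]
  refine cfc_congr fun x hx => ?_
  rw [mul_right_comm, ← Real.rpow_add (hspec x hx)]
  norm_num [Real.rpow_neg_one, inv_mul_cancel₀ (hspec x hx).ne']

variable [IsTopologicalRing A] [T2Space A]

theorem cfc_rpow_neg_half_mul_mem_unitary {a u : A} (hua : star u * u = a) (hau : u * star u = a)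
    (hspec : ∀ x ∈ spectrum ℝ a, 0 < x) :
    cfc (fun x : ℝ => x ^ (-(1/2 : ℝ))) a * u ∈ unitary A := by
  have ha : IsSelfAdjoint a := hua ▸ .star_mul_self u
  set s := cfc (fun x : ℝ => x ^ (-(1/2 : ℝ))) a
  have hs : IsSelfAdjoint s := cfc_predicate _ a
  have hsa : Commute s a := Commute.cfc_real (.refl a) _
  have hau' : Commute a u := by
    rw [Commute, SemiconjBy]
    nth_rewrite 1 [← hau]
    rw [← hua, mul_assoc]
  have hsu : Commute s u := hau'.cfc_real _
  have hsas : s * a * s = 1 := cfc_rpow_neg_half_mul_mul_cfc_rpow_neg_half ha hspec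
  refine Unitary.mem_iff.mpr ⟨?_, ?_⟩
  · calc star (s * u) * (s * u) = star u * u * s * s := by
          rw [star_mul, hs.star_eq]; simp only [mul_assoc, hsu.eq, hsu.left_comm]
      _ = 1 := by rw [hua, ← hsa.eq, hsas]
  · calc s * u * star (s * u) = s * (u * star u) * s := by
          rw [star_mul, hs.star_eq]; simp only [mul_assoc]
      _ = 1 := by rw [hau, hsas]

end InvSqrt

section CStarAlgebra

variable {A : Type*} [CStarAlgebra A]

noncomputable def directRotation (p q : A) : A :=
  cfc (fun x : ℝ => x ^ (-(1/2 : ℝ))) (1 - (p - q) ^ 2) * projIntertwiner p q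

variable {p q : A}

theorem IsStarProjection.directRotation_mem_unitary (hp : IsStarProjection p)
    (hq : IsStarProjection q) (hpq : ‖p - q‖ < 1) : directRotation p q ∈ unitary A := by
  nontriviality A
  exact cfc_rpow_neg_half_mul_mem_unitary (hp.star_mul_projIntertwiner hq)
    (hp.projIntertwiner_mul_star hq) <| spectrum_one_sub_pos <|
      (norm_pow_le' _ two_pos).trans_lt (pow_lt_one₀ (norm_nonneg _) hpq two_ne_zero)

theorem IsStarProjection.mul_directRotation (hp : IsStarProjection p) (hq : IsStarProjection q) :
    p * directRotation p q = directRotation p q * q := by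
  have hpu := mul_projIntertwiner hp.isIdempotentElem hq.isIdempotentElem
  have hqu : q * star (projIntertwiner p q) = star (projIntertwiner p q) * p := by
    simpa [hp.isSelfAdjoint.star_eq, hq.isSelfAdjoint.star_eq] using congrArg star hpu.symm
  have hpa : Commute p (1 - (p - q) ^ 2) :=
    hp.projIntertwiner_mul_star hq ▸ commute_mul_of_intertwines hpu hqu
  rw [directRotation, ← mul_assoc, (hpa.symm.cfc_real _).symm.eq, mul_assoc, hpu, mul_assoc]

theorem IsStarProjection.star_directRotation_mul_mul (hp : IsStarProjection p)
    (hq : IsStarProjection q) (hpq : ‖p - q‖ < 1) :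
    star (directRotation p q) * p * directRotation p q = q := by
  rw [mul_assoc, hp.mul_directRotation hq, ← mul_assoc,
    Unitary.star_mul_self_of_mem (hp.directRotation_mem_unitary hq hpq), one_mul]

end CStarAlgebra

/-- Let `H` be a complex Hilbert space and `Q`, `Q₀` orthogonal projections on `H`
(bounded self-adjoint idempotents) with `‖Q - Q₀‖ < 1`.  Let
`W = (1 - (Q - Q₀)²)^(-1/2) * (Q Q₀ + (1 - Q)(1 - Q₀))`, where the inverse square
root of the positive invertible operator `1 - (Q - Q₀)²` is given by the continuous
functional calculus.  Then `W` is unitary and `W⁻¹ Q W = Q₀` (with `W⁻¹ = W*`). -/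
theorem reed_simon_unitary_conjugation
    (H : Type*) [NormedAddCommGroup H] [InnerProductSpace ℂ H] [CompleteSpace H]
    (Q Q₀ : H →L[ℂ] H)
    (hQsa : IsSelfAdjoint Q) (hQidem : Q * Q = Q)
    (hQ₀sa : IsSelfAdjoint Q₀) (hQ₀idem : Q₀ * Q₀ = Q₀)
    (hnorm : ‖Q - Q₀‖ < 1)
    (W : H →L[ℂ] H)
    (hW : W = cfc (fun x : ℝ => x ^ (-(1/2 : ℝ))) (1 - (Q - Q₀) ^ 2)
        * (Q * Q₀ + (1 - Q) * (1 - Q₀))) :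
    W ∈ unitary (H →L[ℂ] H) ∧ star W * Q * W = Q₀ := by
  have hQ : IsStarProjection Q := ⟨hQidem, hQsa⟩
  have hQ₀ : IsStarProjection Q₀ := ⟨hQ₀idem, hQ₀sa⟩
  obtain rfl : W = directRotation Q Q₀ := hW
  exact ⟨hQ.directRotation_mem_unitary hQ₀ hnorm, hQ.star_directRotation_mul_mul hQ₀ hnorm⟩
end

section
/- Fix ε > 0 and define F : ℝ → ℝ by F(λ) = π^{−1/2} ∫_ε^∞ λ e^{−tλ²} t^{−1/2} dt. Then F(λ) → 1 as λ → 0 from the right (λ → 0⁺), and F(λ) → −1 as λ → 0 from the left (λ → 0⁻). -/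
open MeasureTheory Set Filter

noncomputable def gkern (s : ℝ) : ℝ := Real.exp (-s) * s ^ (-(1 / 2) : ℝ)

lemma gkern_integrableOn : IntegrableOn gkern (Ioi 0) := by
  have h := Real.GammaIntegral_convergent (by norm_num : (0:ℝ) < 1/2)
  have : ((1:ℝ)/2 - 1) = (-(1/2) : ℝ) := by norm_num
  rw [this] at h
  exact h

lemma integral_gkern : ∫ s in Ioi (0:ℝ), gkern s = Real.sqrt Real.pi := by
  have h := Real.Gamma_eq_integral (by norm_num : (0:ℝ) < 1/2)
  have h2 : ((1:ℝ)/2 - 1) = (-(1/2) : ℝ) := by norm_num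
  rw [h2] at h
  simp only [gkern]
  rw [← h, Real.Gamma_one_half_eq]

noncomputable def G (c : ℝ) : ℝ := ∫ s in Ioi c, gkern s

lemma G_tendsto : Tendsto G (nhdsWithin 0 (Ioi (0:ℝ))) (nhds (Real.sqrt Real.pi)) := by
  have key : ∀ c : ℝ, 0 < c →
      Real.sqrt Real.pi - 2 * Real.sqrt c ≤ G c ∧ G c ≤ Real.sqrt Real.pi := by
    intro c hc
    have hsplit : (Ioc 0 c) ∪ (Ioi c) = Ioi (0:ℝ) := Ioc_union_Ioi_eq_Ioi hc.le
    have hInt1 : IntegrableOn gkern (Ioc 0 c) :=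
      gkern_integrableOn.mono_set (by rw [← hsplit]; exact subset_union_left)
    have hInt2 : IntegrableOn gkern (Ioi c) :=
      gkern_integrableOn.mono_set (by rw [← hsplit]; exact subset_union_right)
    have hsum : (∫ s in Ioc 0 c, gkern s) + G c = Real.sqrt Real.pi := by
      rw [← integral_gkern, ← hsplit, setIntegral_union (Ioc_disjoint_Ioi le_rfl)
        measurableSet_Ioi hInt1 hInt2]
      rfl
    have hnonneg : 0 ≤ ∫ s in Ioc 0 c, gkern s := by
      refine setIntegral_nonneg measurableSet_Ioc fun x hx => ?_
      exact mul_nonneg (Real.exp_nonneg _) (Real.rpow_nonneg hx.1.le _)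
    have hbound : (∫ s in Ioc 0 c, gkern s) ≤ 2 * Real.sqrt c := by
      have hle : (∫ s in Ioc 0 c, gkern s) ≤ ∫ s in Ioc 0 c, s ^ (-(1/2) : ℝ) := by
        refine setIntegral_mono_on hInt1 ?_ measurableSet_Ioc fun x hx => ?_
        · have := intervalIntegral.intervalIntegrable_rpow'
            (a := 0) (b := c) (r := (-(1/2) : ℝ)) (by norm_num)
          simpa [intervalIntegrable_iff, uIoc_of_le hc.le] using this
        · calc Real.exp (-x) * x ^ (-(1/2) : ℝ) ≤ 1 * x ^ (-(1/2) : ℝ) := by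
                refine mul_le_mul_of_nonneg_right ?_ (Real.rpow_nonneg hx.1.le _)
                exact Real.exp_le_one_iff.mpr (by linarith [hx.1])
             _ = x ^ (-(1/2) : ℝ) := one_mul _
      have heq : (∫ s in Ioc 0 c, s ^ (-(1/2) : ℝ)) = 2 * Real.sqrt c := by
        rw [← intervalIntegral.integral_of_le hc.le,
          integral_rpow (Or.inl (by norm_num : (-1:ℝ) < -(1/2)))]
        rw [Real.zero_rpow (by norm_num : (-(1/2):ℝ) + 1 ≠ 0)]
        rw [Real.sqrt_eq_rpow]
        norm_num
        ring
      linarith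
    constructor <;> linarith
  have h1 : Tendsto (fun c : ℝ => Real.sqrt Real.pi - 2 * Real.sqrt c)
      (nhdsWithin 0 (Ioi (0:ℝ))) (nhds (Real.sqrt Real.pi)) := by
    have : Tendsto (fun c : ℝ => Real.sqrt Real.pi - 2 * Real.sqrt c)
        (nhds 0) (nhds (Real.sqrt Real.pi - 2 * Real.sqrt 0)) := by
      exact (tendsto_const_nhds.sub ((continuous_const.mul
        Real.continuous_sqrt).tendsto 0))
    simpa using this.mono_left nhdsWithin_le_nhds
  refine tendsto_of_tendsto_of_tendsto_of_le_of_le' h1 tendsto_const_nhds ?_ ?_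
  · filter_upwards [self_mem_nhdsWithin] with c hc using (key c hc).1
  · filter_upwards [self_mem_nhdsWithin] with c hc using (key c hc).2

lemma change_of_var (ε : ℝ) (hε : 0 < ε) (l : ℝ) (hl : l ≠ 0) :
    (∫ t in Ioi ε, l * Real.exp (-t * l ^ 2) * t ^ (-(1 / 2) : ℝ))
      = (l * |l|⁻¹) * G (l ^ 2 * ε) := by
  have hl2 : 0 < l ^ 2 := by positivity
  have habs : (l ^ 2 : ℝ) ^ (-(1/2) : ℝ) = |l|⁻¹ := by
    rw [← sq_abs, ← Real.rpow_natCast |l| 2, ← Real.rpow_mul (abs_nonneg l)]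
    norm_num
    rw [Real.rpow_neg_one]
  have hcongr : (∫ t in Ioi ε, l * Real.exp (-t * l ^ 2) * t ^ (-(1 / 2) : ℝ))
      = ∫ t in Ioi ε, (l * |l|) • gkern (l ^ 2 * t) := by
    refine setIntegral_congr_fun measurableSet_Ioi fun t ht => ?_
    have ht0 : 0 < t := hε.trans ht
    simp only [gkern, smul_eq_mul]
    rw [Real.mul_rpow hl2.le ht0.le, habs]
    rw [show -(l ^ 2 * t) = -t * l ^ 2 by ring]
    field_simp
  rw [hcongr, integral_smul, MeasureTheory.integral_comp_mul_left_Ioi gkern ε hl2]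
  simp only [smul_eq_mul, G]
  have habs0 : |l| ≠ 0 := abs_ne_zero.mpr hl
  have hsc : l * |l| * (l ^ 2)⁻¹ = l * |l|⁻¹ := by
    rw [← sq_abs l, sq, mul_inv, ← mul_assoc, mul_assoc l |l| |l|⁻¹,
      mul_inv_cancel₀ habs0, mul_one]
  calc l * |l| * ((l ^ 2)⁻¹ * ∫ x in Ioi (l ^ 2 * ε), gkern x)
      = (l * |l| * (l ^ 2)⁻¹) * ∫ x in Ioi (l ^ 2 * ε), gkern x := by ring
    _ = (l * |l|⁻¹) * ∫ x in Ioi (l ^ 2 * ε), gkern x := by rw [hsc]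

/-- Fix `ε > 0` and define `F : ℝ → ℝ` by
`F(λ) = π^(-1/2) ∫_ε^∞ λ e^(-tλ²) t^(-1/2) dt`.
Then `F(λ) → 1` as `λ → 0⁺` and `F(λ) → -1` as `λ → 0⁻`. -/
theorem truncated_eta_jump (ε : ℝ) (hε : 0 < ε) (F : ℝ → ℝ)
    (hF : ∀ l : ℝ, F l = Real.pi ^ (-(1 / 2) : ℝ)
        * ∫ t in Set.Ioi ε, l * Real.exp (-t * l ^ 2) * t ^ (-(1 / 2) : ℝ)) :
    Filter.Tendsto F (nhdsWithin 0 (Set.Ioi (0 : ℝ))) (nhds 1)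
    ∧ Filter.Tendsto F (nhdsWithin 0 (Set.Iio (0 : ℝ))) (nhds (-1)) := by
  have hpi : Real.pi ^ (-(1 / 2) : ℝ) * Real.sqrt Real.pi = 1 := by
    rw [Real.rpow_neg Real.pi_pos.le, Real.sqrt_eq_rpow]
    exact inv_mul_cancel₀ (ne_of_gt (Real.rpow_pos_of_pos Real.pi_pos _))
  have hGcomp : ∀ s : Set ℝ, (∀ x ∈ s, x ≠ 0) →
      Tendsto (fun l : ℝ => G (l ^ 2 * ε)) (nhdsWithin 0 s)
        (nhds (Real.sqrt Real.pi)) := by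
    intro s hs
    refine G_tendsto.comp ?_
    rw [tendsto_nhdsWithin_iff]
    constructor
    · have : Tendsto (fun l : ℝ => l ^ 2 * ε) (nhds 0) (nhds ((0:ℝ) ^ 2 * ε)) := by
        exact ((continuous_pow 2).mul continuous_const).tendsto 0
      simpa using this.mono_left nhdsWithin_le_nhds
    · filter_upwards [self_mem_nhdsWithin] with l hl
      have : l ≠ 0 := hs l hl
      have : 0 < l ^ 2 * ε := by positivity
      exact this
  constructor
  · have hT : Tendsto (fun l : ℝ => Real.pi ^ (-(1 / 2) : ℝ) * G (l ^ 2 * ε))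
        (nhdsWithin 0 (Ioi (0:ℝ)))
        (nhds (Real.pi ^ (-(1 / 2) : ℝ) * Real.sqrt Real.pi)) :=
      (hGcomp (Ioi 0) fun x hx => ne_of_gt hx).const_mul _
    rw [hpi] at hT
    refine hT.congr' ?_
    filter_upwards [self_mem_nhdsWithin] with l hl
    rw [hF l, change_of_var ε hε l (ne_of_gt hl), abs_of_pos hl,
      mul_inv_cancel₀ (ne_of_gt hl), one_mul]
  · have hT : Tendsto (fun l : ℝ => -(Real.pi ^ (-(1 / 2) : ℝ) * G (l ^ 2 * ε)))
        (nhdsWithin 0 (Iio (0:ℝ)))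
        (nhds (-(Real.pi ^ (-(1 / 2) : ℝ) * Real.sqrt Real.pi))) :=
      ((hGcomp (Iio 0) fun x hx => ne_of_lt hx).const_mul _).neg
    rw [hpi] at hT
    refine hT.congr' ?_
    filter_upwards [self_mem_nhdsWithin] with l hl
    have hl' : l ≠ 0 := ne_of_lt hl
    rw [hF l, change_of_var ε hε l hl', abs_of_neg hl,
      show l * (-l)⁻¹ = -1 by field_simp]
    ring
end
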